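/- arXiv:1512.01247 — 6 statements merged into one kernel-verified Lean document; each statement's English description precedes it below -/
import Mathlib

section
/- Let k be a commutative ring containing the rationals, and let l be an element of a k-algebra (e.g. a polynomial algebra) that decomposes as l = Σ_{i=0}^n l_i where each l_i is homogeneous of degree i in a variable y. If the substitution l[y ↦ j·y] lies in a given k-submodule S for all j = 1, ..., n+1, and S is closed under these substitutions, then each homogeneous component l_i lies in S. (The proof uses invertibility of the Vandermonde matrix over Q.) -/
/-- Homogeneous components of a decomposition lie in a submodule closed under
the substitutions `y ↦ j·y` (Vandermonde argument over ℚ). The substitution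
`y ↦ j·y` multiplies the degree-`i` homogeneous component by `j^i`. -/
theorem homogeneous_components_mem
    {k A : Type*} [CommRing k] [Algebra ℚ k] [AddCommGroup A] [Module k A]
    (n : ℕ) (l : ℕ → A) (S : Submodule k A)
    (h : ∀ j ∈ Finset.Icc 1 (n + 1),
      (∑ i ∈ Finset.range (n + 1), ((j : k) ^ i) • l i) ∈ S) :
    ∀ i ≤ n, l i ∈ S := by
  intro i hi
  set m := n + 1 with hm
  set v : Fin m → ℚ := fun j => (j : ℚ) + 1 with hv
  set M : Matrix (Fin m) (Fin m) ℚ := Matrix.vandermonde v with hM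
  have hdet : IsUnit M.det := by
    rw [hM, Matrix.det_vandermonde]
    refine (Finset.prod_ne_zero_iff.2 fun a _ => Finset.prod_ne_zero_iff.2
      fun b hb => ?_).isUnit
    have hab : a < b := Finset.mem_Ioi.mp hb
    have hq : ((a:ℕ) : ℚ) < ((b:ℕ) : ℚ) := by exact_mod_cast (Fin.lt_iff_val_lt_val.mp hab)
    simp only [hv]
    intro hzero
    have : (b : ℚ) + 1 = (a : ℚ) + 1 := sub_eq_zero.mp hzero
    linarith
  have hinv : M⁻¹ * M = 1 := Matrix.nonsing_inv_mul M hdet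
  have fi : Fin m := ⟨i, by omega⟩
  let fi : Fin m := ⟨i, by omega⟩
  let φ := algebraMap ℚ k
  have key : ∑ j : Fin m, (φ (M⁻¹ fi j)) •
      (∑ i' ∈ Finset.range m, (((j : ℕ) + 1 : k) ^ i') • l i') = l i := by
    have h1 : ∀ j : Fin m,
        (∑ i' ∈ Finset.range m, (((j : ℕ) + 1 : k) ^ i') • l i')
        = ∑ i' : Fin m, (φ (M j i')) • l i' := by
      intro j
      rw [← Fin.sum_univ_eq_sum_range (fun i' => (((j : ℕ) + 1 : k) ^ i') • l i')]
      refine Finset.sum_congr rfl fun i' _ => ?_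
      congr 1
      simp [hM, Matrix.vandermonde, hv, φ, map_pow]
    simp only [h1, Finset.smul_sum, smul_smul]
    rw [Finset.sum_comm]
    have h2 : ∀ i' : Fin m,
        ∑ j : Fin m, (φ (M⁻¹ fi j) * φ (M j i')) = φ ((1 : Matrix (Fin m) (Fin m) ℚ) fi i') := by
      intro i'
      rw [← hinv, Matrix.mul_apply, map_sum]
      exact Finset.sum_congr rfl fun j _ => (map_mul φ _ _).symm
    calc ∑ i' : Fin m, ∑ j : Fin m, (φ (M⁻¹ fi j) * φ (M j i')) • l i'
        = ∑ i' : Fin m, (φ ((1 : Matrix (Fin m) (Fin m) ℚ) fi i')) • l i' := by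
          refine Finset.sum_congr rfl fun i' _ => ?_
          rw [← Finset.sum_smul, h2]
      _ = l i := by
          rw [Finset.sum_eq_single fi]
          · simp [Matrix.one_apply, φ, fi]
          · intro b _ hb
            simp [Matrix.one_apply, Ne.symm hb, φ]
          · simp
  rw [← key]
  refine Submodule.sum_mem S fun j _ => S.smul_mem _ ?_
  have hj := h ((j : ℕ) + 1) (by simp [hm]; omega)
  convert hj using 2 <;> push_cast <;> ring_nf
end

section
/- Let (A, d, P) be a commutative algebra with a derivation d and a linear right inverse P of d (d∘P = id) such that the map e := id − P∘d is multiplicative. Then P is automatically a Rota-Baxter operator of weight 0: P(f)·P(g) = P(f·P(g)) + P(g·P(f)) for all f, g ∈ A. -/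
/-- If `d` is a derivation, `P` a linear right inverse of `d`, and
`e = id − P∘d` is multiplicative, then `P` is a weight-0 Rota-Baxter operator. -/
theorem rota_baxter_of_mult_eval {k A : Type*} [CommRing k] [CommRing A] [Algebra k A]
    (d P : A →ₗ[k] A)
    (hd : ∀ f g : A, d (f * g) = d f * g + f * d g)
    (hs : ∀ f : A, d (P f) = f)
    (he : ∀ f g : A, (f * g) - P (d (f * g)) = (f - P (d f)) * (g - P (d g))) :
    ∀ f g : A, P f * P g = P (f * P g) + P (g * P f) := by
  intro f g
  have h := he (P f) (P g)
  rw [hs, hs, sub_self, sub_self, zero_mul, sub_eq_zero] at h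
  rw [h, hd, hs, hs, map_add]
  ring_nf
end

section
/- Let (A, d, V) be a differential Rota-Baxter algebra of weight 0 with K := ker(d), and let à := A ⊗_K A. Define d̃(f ⊗ g) := d(f) ⊗ g and P(f ⊗ g) := V(f) ⊗ g − 1 ⊗ (g·V(f)). Then d̃ is a derivation on Ã, d̃ ∘ P = id, and the evaluation ẽ := id − P∘d̃ satisfies ẽ(f ⊗ g) = 1 ⊗ (fg); in particular ẽ is multiplicative, so (Ã, d̃, P) is an integro-differential algebra. -/
open scoped TensorProduct

/-- The free integro-differential algebra over a differential Rota-Baxter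
algebra: on `Ã = A ⊗[K] A` (with `K` playing the role of `ker d`, i.e. the
constants, via `hk`), the maps `d̃(f⊗g) = d(f)⊗g` and
`P(f⊗g) = V(f)⊗g − 1⊗(g·V(f))` make `Ã` an integro-differential algebra:
`d̃` is a derivation, `d̃∘P = id`, and the evaluation `ẽ = id − P∘d̃`
satisfies `ẽ(f⊗g) = 1⊗(fg)`, hence is multiplicative. -/
theorem free_integro_differential {K A : Type*} [CommRing K] [CommRing A] [Algebra K A]
    (d V : A →ₗ[K] A)
    (hd : ∀ f g : A, d (f * g) = d f * g + f * d g)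
    (hV : ∀ f g : A, V f * V g = V (f * V g) + V (g * V f))
    (hs : ∀ f : A, d (V f) = f)
    (hk : ∀ a : A, d a = 0 ↔ ∃ c : K, algebraMap K A c = a)
    (dT P : A ⊗[K] A →ₗ[K] A ⊗[K] A)
    (hdT : ∀ f g : A, dT (f ⊗ₜ[K] g) = d f ⊗ₜ[K] g)
    (hP : ∀ f g : A, P (f ⊗ₜ[K] g) = V f ⊗ₜ[K] g - 1 ⊗ₜ[K] (g * V f)) :
    (∀ u v : A ⊗[K] A, dT (u * v) = dT u * v + u * dT v) ∧
    (∀ u : A ⊗[K] A, dT (P u) = u) ∧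
    (∀ f g : A, (f ⊗ₜ[K] g) - P (dT (f ⊗ₜ[K] g)) = 1 ⊗ₜ[K] (f * g)) ∧
    (∀ u v : A ⊗[K] A,
      (u * v) - P (dT (u * v)) = (u - P (dT u)) * (v - P (dT v))) := by
  have hd1 : d 1 = 0 := by have := hd 1 1; simpa using this
  have leib : ∀ u v : A ⊗[K] A, dT (u * v) = dT u * v + u * dT v := by
    intro u v
    induction u using TensorProduct.induction_on with
    | zero => simp
    | tmul f g =>
      induction v using TensorProduct.induction_on with
      | zero => simp
      | tmul f' g' =>
        rw [Algebra.TensorProduct.tmul_mul_tmul, hdT, hd, TensorProduct.add_tmul,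
          hdT, hdT, Algebra.TensorProduct.tmul_mul_tmul,
          Algebra.TensorProduct.tmul_mul_tmul]
      | add x y hx hy =>
        simp only [mul_add, map_add, hx, hy]; ring
    | add x y hx hy =>
      simp only [add_mul, map_add, hx, hy]; ring
  have sec : ∀ u : A ⊗[K] A, dT (P u) = u := by
    intro u
    induction u using TensorProduct.induction_on with
    | zero => simp
    | tmul f g => simp [hP, hdT, hs, hd1, map_sub, TensorProduct.zero_tmul]
    | add x y hx hy => simp [map_add, hx, hy]
  have he3 : ∀ f g : A, (f ⊗ₜ[K] g) - P (dT (f ⊗ₜ[K] g)) = 1 ⊗ₜ[K] (f * g) := by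
    intro f g
    obtain ⟨c, hc⟩ := (hk (f - V (d f))).1 (by rw [map_sub, hs]; ring)
    have hV' : V (d f) = f - algebraMap K A c := by rw [hc]; ring
    have h2 : g * (f - algebraMap K A c) = f * g - c • g := by
      rw [Algebra.smul_def]; ring
    rw [hdT, hP, hV', h2, TensorProduct.sub_tmul, TensorProduct.tmul_sub,
      Algebra.algebraMap_eq_smul_one, TensorProduct.smul_tmul]
    abel
  refine ⟨leib, sec, he3, ?_⟩
  intro u v
  induction u using TensorProduct.induction_on with
  | zero => simp
  | tmul f g =>
    induction v using TensorProduct.induction_on with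
    | zero => simp
    | tmul f' g' =>
      rw [Algebra.TensorProduct.tmul_mul_tmul, he3, he3, he3,
        Algebra.TensorProduct.tmul_mul_tmul, one_mul]
      congr 1; ring
    | add x y hx hy =>
      simp only [mul_add, map_add]; linear_combination hx + hy
  | add x y hx hy =>
    simp only [add_mul, map_add]; linear_combination hx + hy
end

section
/- With the notation of the free integro-differential algebra à = A ⊗_K A over a differential Rota-Baxter algebra (A, d, V), the operator P(f ⊗ g) := V(f) ⊗ g − 1 ⊗ (g·V(f)) is a Rota-Baxter operator of weight 0 on Ã: P(u)·P(v) = P(u·P(v)) + P(v·P(u)) for all u, v ∈ Ã. -/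
open scoped TensorProduct

/-- On the free integro-differential algebra `Ã = A ⊗[K] A` over a
differential Rota-Baxter algebra `(A, d, V)`, the operator
`P(f⊗g) = V(f)⊗g − 1⊗(g·V(f))` is a Rota-Baxter operator of weight 0. -/
theorem free_integro_differential_rota_baxter {K A : Type*}
    [CommRing K] [CommRing A] [Algebra K A]
    (d V : A →ₗ[K] A)
    (hd : ∀ f g : A, d (f * g) = d f * g + f * d g)
    (hV : ∀ f g : A, V f * V g = V (f * V g) + V (g * V f))
    (hs : ∀ f : A, d (V f) = f)
    (hk : ∀ a : A, d a = 0 ↔ ∃ c : K, algebraMap K A c = a)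
    (P : A ⊗[K] A →ₗ[K] A ⊗[K] A)
    (hP : ∀ f g : A, P (f ⊗ₜ[K] g) = V f ⊗ₜ[K] g - 1 ⊗ₜ[K] (g * V f)) :
    ∀ u v : A ⊗[K] A, P u * P v = P (u * P v) + P (v * P u) := by
  have key : ∀ f g f' g' : A,
      P (f ⊗ₜ[K] g) * P (f' ⊗ₜ[K] g') =
        P ((f ⊗ₜ[K] g) * P (f' ⊗ₜ[K] g')) + P ((f' ⊗ₜ[K] g') * P (f ⊗ₜ[K] g)) := by
    intro f g f' g'
    have h1 : V f * V f' = V (f * V f') + V (f' * V f) := hV f f'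
    simp only [hP, Algebra.TensorProduct.tmul_mul_tmul, mul_sub, sub_mul, map_sub, hP,
      one_mul, mul_one]
    rw [h1]
    simp only [TensorProduct.add_tmul, TensorProduct.tmul_add, mul_add, add_mul,
      mul_comm, mul_left_comm, mul_assoc]
    rw [show g * (g' * (V f * V f')) = g * (g' * V (f * V f')) + g * (g' * V (f' * V f)) by
      rw [h1]; ring]
    simp only [TensorProduct.tmul_add]
    abel
  intro u v
  induction u using TensorProduct.induction_on with
  | zero => simp
  | tmul f g =>
    induction v using TensorProduct.induction_on with
    | zero => simp
    | tmul f' g' => exact key f g f' g'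
    | add x y hx hy =>
      simp only [map_add, add_mul, mul_add, hx, hy]
      ring
  | add x y hx hy =>
    simp only [map_add, add_mul, mul_add, hx, hy]
    ring
end

section
/- Let (Ã, d, P) = (A ⊗_K A, d̃, P) be the free integro-differential algebra over a differential Rota-Baxter algebra (A, d, V), with embedding ι(f) = f ⊗ 1. For any integro-differential algebra (B, d_B, P_B) and any morphism φ : A → B of differential Rota-Baxter algebras, there is a unique morphism φ̃ : Ã → B of integro-differential algebras (commuting with derivations, integrals, and hence evaluations) with φ̃ ∘ ι = φ; it is given by φ̃(f ⊗ g) = φ(f)·e_B(φ(g)) where e_B = id − P_B∘d_B. -/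
open scoped TensorProduct

/-- Universal property of the free integro-differential algebra
`Ã = A ⊗[K] A` over a differential Rota-Baxter algebra `(A, d, V)`:
any morphism `φ : A → B` of differential Rota-Baxter algebras into an
integro-differential algebra `(B, dB, PB)` factors uniquely through
`ι : f ↦ f ⊗ 1` via a morphism `ψ` of integro-differential algebras,
given by `ψ(f ⊗ g) = φ(f)·e_B(φ(g))` with `e_B = id − PB∘dB`. -/
theorem free_integro_differential_universal {K A B : Type*}
    [CommRing K] [CommRing A] [Algebra K A] [CommRing B] [Algebra K B]
    (d V : A →ₗ[K] A)
    (hd : ∀ f g : A, d (f * g) = d f * g + f * d g)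
    (hV : ∀ f g : A, V f * V g = V (f * V g) + V (g * V f))
    (hs : ∀ f : A, d (V f) = f)
    (hk : ∀ a : A, d a = 0 ↔ ∃ c : K, algebraMap K A c = a)
    (dB PB : B →ₗ[K] B)
    (hdB : ∀ f g : B, dB (f * g) = dB f * g + f * dB g)
    (hsB : ∀ f : B, dB (PB f) = f)
    (heB : ∀ f g : B, (f * g) - PB (dB (f * g)) = (f - PB (dB f)) * (g - PB (dB g)))
    (dT PT : A ⊗[K] A →ₗ[K] A ⊗[K] A)
    (hdT : ∀ f g : A, dT (f ⊗ₜ[K] g) = d f ⊗ₜ[K] g)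
    (hPT : ∀ f g : A, PT (f ⊗ₜ[K] g) = V f ⊗ₜ[K] g - 1 ⊗ₜ[K] (g * V f))
    (φ : A →ₐ[K] B)
    (hφd : ∀ f : A, dB (φ f) = φ (d f))
    (hφV : ∀ f : A, PB (φ f) = φ (V f)) :
    ∃! ψ : A ⊗[K] A →ₐ[K] B,
      (∀ u : A ⊗[K] A, dB (ψ u) = ψ (dT u)) ∧
      (∀ u : A ⊗[K] A, PB (ψ u) = ψ (PT u)) ∧
      (∀ f : A, ψ (f ⊗ₜ[K] (1 : A)) = φ f) ∧
      (∀ f g : A, ψ (f ⊗ₜ[K] g) = φ f * (φ g - PB (dB (φ g)))) := by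
  have hdB1 : dB (1 : B) = 0 := by
    have h := hdB 1 1
    simp only [mul_one, one_mul] at h
    exact (left_eq_add.mp h)
  have ePB : ∀ x : B, PB x - PB (dB (PB x)) = 0 := by
    intro x; rw [hsB]; ring
  have hRB : ∀ a b : B, PB a * PB b = PB (a * PB b) + PB (b * PB a) := by
    intro a b
    have h := heB (PB a) (PB b)
    rw [ePB, ePB, zero_mul] at h
    have h2 : PB a * PB b = PB (dB (PB a * PB b)) := sub_eq_zero.mp h
    rw [hdB (PB a) (PB b), hsB, hsB, map_add, mul_comm (PB a) b] at h2
    rw [h2, add_comm]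
  have hkey : ∀ x y : B,
      PB (x * (y - PB (dB y))) =
        PB x * (y - PB (dB y)) - (y * PB x - PB (dB (y * PB x))) := by
    intro x y
    have h1 : dB (y * PB x) = dB y * PB x + y * x := by rw [hdB, hsB]
    rw [h1, map_add, mul_sub, map_sub]
    have h2 : PB x * PB (dB y) = PB (x * PB (dB y)) + PB (dB y * PB x) :=
      hRB x (dB y)
    have h3 : PB (y * x) = PB (x * y) := by rw [mul_comm]
    rw [h3,
      show PB x * (y - PB (dB y)) = PB x * y - PB x * PB (dB y) by ring, h2]
    ring
  let eφ : A →ₐ[K] B :=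
    { toFun := fun a => φ a - PB (dB (φ a))
      map_one' := by simp [hdB1]
      map_mul' := fun a b => by
        simp only [map_mul]
        exact heB (φ a) (φ b)
      map_zero' := by simp
      map_add' := fun a b => by simp only [map_add]; ring
      commutes' := fun c => by
        have hz : dB (algebraMap K B c) = 0 := by
          rw [Algebra.algebraMap_eq_smul_one, map_smul, hdB1, smul_zero]
        simp only [AlgHom.commutes, hz, map_zero, sub_zero] }
  have hdBe : ∀ x : B, dB (x - PB (dB x)) = 0 := by
    intro x; rw [map_sub, hsB, sub_self]
  refine ⟨Algebra.TensorProduct.productMap φ eφ, ⟨?_, ?_, ?_, ?_⟩, ?_⟩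
  · intro u
    induction u using TensorProduct.induction_on with
    | zero => simp
    | tmul f g =>
      rw [hdT, Algebra.TensorProduct.productMap_apply_tmul,
        Algebra.TensorProduct.productMap_apply_tmul, hdB,
        show (eφ g : B) = φ g - PB (dB (φ g)) from rfl,
        hdBe (φ g), mul_zero, add_zero, hφd]
    | add x y hx hy => simp only [map_add, hx, hy]
  · intro u
    induction u using TensorProduct.induction_on with
    | zero => simp
    | tmul f g =>
      rw [hPT, Algebra.TensorProduct.productMap_apply_tmul, map_sub,
        Algebra.TensorProduct.productMap_apply_tmul,
        Algebra.TensorProduct.productMap_apply_tmul, map_one, one_mul]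
      show PB (φ f * (φ g - PB (dB (φ g)))) =
        φ (V f) * (φ g - PB (dB (φ g))) - (φ (g * V f) - PB (dB (φ (g * V f))))
      rw [← hφV, map_mul φ g (V f), ← hφV]
      exact hkey (φ f) (φ g)
    | add x y hx hy => simp only [map_add, hx, hy]
  · intro f
    rw [Algebra.TensorProduct.productMap_apply_tmul, map_one, mul_one]
  · intro f g
    rw [Algebra.TensorProduct.productMap_apply_tmul]
    rfl
  · intro ψ' ⟨_, _, _, h4⟩
    apply AlgHom.ext
    intro u
    induction u using TensorProduct.induction_on with
    | zero => simp
    | tmul f g =>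
      rw [h4, Algebra.TensorProduct.productMap_apply_tmul]
      rfl
    | add x y hx hy => rw [map_add, map_add, hx, hy]
end

section
/- Let (A, d, P) be an integro-differential algebra of weight 0 with evaluation e = id − P∘d. Then as operators on A, for every f ∈ A and every k ≥ 1: P ∘ M_f ∘ d^k = Σ_{i=0}^{k−1} (−1)^i (M_{d^i f} − e(d^i f)·e) ∘ d^{k−i−1} + (−1)^k P ∘ M_{d^k f}, where M_g denotes multiplication by g. -/
/-- In an integro-differential algebra of weight 0, the operator identity
`P∘M_f∘d^k = Σ_{i<k} (−1)^i (M_{f^(i)} − e(f^(i))·e)∘d^{k−i−1} + (−1)^k P∘M_{f^(k)}`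
holds pointwise, where `e(g) = g − P(d g)`. -/
theorem integro_differential_operator_identity
    {k A : Type*} [CommRing k] [CommRing A] [Algebra k A]
    (d P : A →ₗ[k] A)
    (hd : ∀ f g : A, d (f * g) = d f * g + f * d g)
    (hs : ∀ f : A, d (P f) = f)
    (he : ∀ f g : A, (f * g) - P (d (f * g)) = (f - P (d f)) * (g - P (d g)))
    (f h : A) (n : ℕ) (hn : 1 ≤ n) :
    P (f * (d ^ n) h) =
      (∑ i ∈ Finset.range n, (-1 : A) ^ i *
        ((d ^ i) f * (d ^ (n - i - 1)) h -
          ((d ^ i) f - P (d ((d ^ i) f))) *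
            ((d ^ (n - i - 1)) h - P (d ((d ^ (n - i - 1)) h))))) +
      (-1 : A) ^ n * P ((d ^ n) f * h) := by
  clear hn hs
  have key : ∀ u v : A, P (u * d v) = u * v - (u - P (d u)) * (v - P (d v)) - P (d u * v) := by
    intro u v
    have h1 := he u v
    have h2 : P (d (u * v)) = P (d u * v) + P (u * d v) := by
      rw [hd]; exact map_add P _ _
    linear_combination -h1 - h2
  induction n generalizing f with
  | zero => simp
  | succ n ih =>
    have hdn : (d ^ (n + 1)) h = d ((d ^ n) h) := by
      rw [pow_succ']; rfl
    rw [hdn, key f ((d ^ n) h), ih (d f), Finset.sum_range_succ']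
    have hshift : ∀ i : ℕ, (d ^ (i + 1)) f = (d ^ i) (d f) := by
      intro i; rw [pow_succ]; rfl
    have hsum : ∑ i ∈ Finset.range n, (-1 : A) ^ (i + 1) *
        ((d ^ (i + 1)) f * (d ^ (n + 1 - (i + 1) - 1)) h -
          ((d ^ (i + 1)) f - P (d ((d ^ (i + 1)) f))) *
            ((d ^ (n + 1 - (i + 1) - 1)) h - P (d ((d ^ (n + 1 - (i + 1) - 1)) h)))) =
        -∑ i ∈ Finset.range n, (-1 : A) ^ i *
        ((d ^ i) (d f) * (d ^ (n - i - 1)) h -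
          ((d ^ i) (d f) - P (d ((d ^ i) (d f)))) *
            ((d ^ (n - i - 1)) h - P (d ((d ^ (n - i - 1)) h)))) := by
      rw [← Finset.sum_neg_distrib]
      refine Finset.sum_congr rfl fun i _ => ?_
      have : n + 1 - (i + 1) - 1 = n - i - 1 := by omega
      rw [this, hshift]
      ring
    rw [hsum]
    have h0 : n + 1 - 0 - 1 = n := by omega
    rw [h0]
    have hfn : (d ^ (n + 1)) f = (d ^ n) (d f) := hshift n
    rw [hfn]
    simp only [pow_zero, Module.End.one_apply]
    ring
end
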